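/- arXiv:2211.10614 — 6 statements merged into one kernel-verified Lean document; each statement's English description precedes it below -/
import Mathlib

section
/- For every integer n ≥ 4, the nonlocal metric dimension of the cycle C_n on n vertices equals 2. -/
/-- `X` is a nonlocal resolving set of `G`: every pair of distinct non-adjacent
vertices is resolved by some vertex of `X`. -/
def IsNLResolving {V : Type*} (G : SimpleGraph V) (X : Finset V) : Prop :=
  ∀ u v : V, u ≠ v → ¬ G.Adj u v → ∃ x ∈ X, G.dist u x ≠ G.dist v x

/-- The nonlocal metric dimension of `G`. -/
noncomputable def nldim {V : Type*} [Fintype V] (G : SimpleGraph V) : ℕ :=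
  sInf {n | ∃ X : Finset V, X.card = n ∧ IsNLResolving G X}

/-- `X` is a resolving set of `G`. -/
def IsResolving {V : Type*} (G : SimpleGraph V) (X : Finset V) : Prop :=
  ∀ u v : V, u ≠ v → ∃ x ∈ X, G.dist u x ≠ G.dist v x

/-- The metric dimension of `G`. -/
noncomputable def metricDim {V : Type*} [Fintype V] (G : SimpleGraph V) : ℕ :=
  sInf {n | ∃ X : Finset V, X.card = n ∧ IsResolving G X}

/-- The corona product `G ⊙ H`: one copy of `G` and, for each vertex `g` of `G`,
a copy of `H` whose vertices are all joined to `g`. -/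
def corona {V W : Type*} (G : SimpleGraph V) (H : SimpleGraph W) :
    SimpleGraph (V ⊕ V × W) :=
  SimpleGraph.fromRel (fun a b =>
    match a, b with
    | Sum.inl g, Sum.inl g' => G.Adj g g'
    | Sum.inl g, Sum.inr p => g = p.1
    | Sum.inr p, Sum.inr q => p.1 = q.1 ∧ H.Adj p.2 q.2
    | _, _ => False)

/-- The join `H + K₁`: a new vertex (`none`) adjacent to every vertex of `H`. -/
def joinK1 {W : Type*} (H : SimpleGraph W) : SimpleGraph (Option W) :=
  SimpleGraph.fromRel (fun a b =>
    a = none ∨ ∃ w w', a = some w ∧ b = some w' ∧ H.Adj w w')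

/-- The wheel `W_{1,n} = K₁ + Cₙ`, with central vertex `none`. -/
def wheel (n : ℕ) : SimpleGraph (Option (Fin n)) :=
  joinK1 (SimpleGraph.cycleGraph n)

/-- `A_{i,j}` is a gap of `X ⊆ V(Cₙ)`: `i, j ∈ X`, `i ≠ j`, and no vertex of
`{i+1, …, j-1}` (cyclically) lies in `X`. -/
def IsGap {n : ℕ} (X : Finset (Fin n)) (i j : Fin n) : Prop :=
  i ∈ X ∧ j ∈ X ∧ i ≠ j ∧
    ∀ k : Fin n, 0 < (k - i).val → (k - i).val < (j - i).val → k ∉ X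

/-- The number of vertices in the gap `A_{i,j} = {i+1, …, j-1}`. -/
def gapSize {n : ℕ} (i j : Fin n) : ℕ := (j - i).val - 1

/-- The edge cover number `β'(G)`: the least number of edges of `G` covering all
vertices. -/
noncomputable def edgeCoverNum {V : Type*} [Fintype V] (G : SimpleGraph V) : ℕ :=
  sInf {n | ∃ F : Finset (Sym2 V), F.card = n ∧ ↑F ⊆ G.edgeSet ∧ ∀ v : V, ∃ e ∈ F, v ∈ e}

/-! On `Fin n` the graph distance of the cycle is the cyclic distance
`min (a - b) (b - a)`: walking forward gives the upper bound, and the lower bound holds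
because the cyclic distance to a fixed vertex changes by at most one along an edge.
Hence the vertices `0` and `1` resolve every pair, while a single vertex `x` never
separates `x + 1` from `x - 1`, which are distinct and non-adjacent once `n ≥ 4`. -/

open SimpleGraph
open scoped Fin.NatCast Fin.CommRing

lemma Fin.val_sub_eq_ite {n : ℕ} (a b : Fin n) :
    (a - b).val = if b.val ≤ a.val then a.val - b.val else n + a.val - b.val := by
  split_ifs with h
  · exact Fin.coe_sub_iff_le.2 h
  · exact Fin.coe_sub_iff_lt.2 (not_le.1 h)

lemma Fin.val_one_of_two_le {n : ℕ} [NeZero n] (hn : 2 ≤ n) : (1 : Fin n).val = 1 := by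
  rw [Fin.val_one', Nat.mod_eq_of_lt hn]

namespace SimpleGraph

variable {V : Type*} {G : SimpleGraph V}

lemma Walk.le_add_length_of_adj {f : V → ℕ} (hf : ∀ u v, G.Adj u v → f u ≤ f v + 1)
    {u v : V} (p : G.Walk u v) : f u ≤ f v + p.length := by
  induction p with
  | nil => simp
  | cons h _ ih => grind [Walk.length_cons, hf _ _ h]

lemma Reachable.le_add_dist_of_adj {f : V → ℕ} (hf : ∀ u v, G.Adj u v → f u ≤ f v + 1)
    {u v : V} (h : G.Reachable u v) : f u ≤ f v + G.dist u v := by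
  obtain ⟨p, hp⟩ := h.exists_walk_length_eq_dist
  exact hp ▸ p.le_add_length_of_adj hf

end SimpleGraph

lemma IsResolving.isNLResolving {V : Type*} {G : SimpleGraph V} {X : Finset V}
    (hX : IsResolving G X) : IsNLResolving G X :=
  fun u v huv _ => hX u v huv

lemma nldim_eq_of_isLeast {V : Type*} [Fintype V] {G : SimpleGraph V} {k : ℕ}
    (h : IsLeast {m | ∃ X : Finset V, X.card = m ∧ IsNLResolving G X} k) : nldim G = k :=
  h.csInf_eq

section Cycle

variable {n : ℕ} [NeZero n]

lemma cycleGraph_adj_add_one (hn : 2 ≤ n) (a : Fin n) : (cycleGraph n).Adj a (a + 1) := by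
  rw [cycleGraph_adj', add_sub_cancel_left, Fin.val_one_of_two_le hn]
  exact Or.inr rfl

lemma cycleGraph_dist_add_natCast_le (hn : 2 ≤ n) (a : Fin n) (k : ℕ) :
    (cycleGraph n).dist a (a + k) ≤ k := by
  induction k with
  | zero => simp
  | succ k ih =>
    calc (cycleGraph n).dist a (a + ↑(k + 1))
        ≤ (cycleGraph n).dist a (a + k) + (cycleGraph n).dist (a + k) (a + ↑(k + 1)) :=
          (cycleGraph_preconnected _ _).dist_triangle_right _
      _ ≤ k + 1 := by
          rw [Nat.cast_succ, ← add_assoc, dist_eq_one_iff_adj.2 (cycleGraph_adj_add_one hn _)]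
          omega

lemma cycleGraph_dist_le_val_sub (hn : 2 ≤ n) (a b : Fin n) :
    (cycleGraph n).dist a b ≤ (b - a).val := by
  simpa using cycleGraph_dist_add_natCast_le hn a (b - a).val

lemma cycleGraph_dist (hn : 2 ≤ n) (a b : Fin n) :
    (cycleGraph n).dist a b = min (a - b).val (b - a).val := by
  refine le_antisymm (le_min ?_ (cycleGraph_dist_le_val_sub hn a b)) ?_
  · exact dist_comm (G := cycleGraph n) ▸ cycleGraph_dist_le_val_sub hn b a
  · have hlip : ∀ u v, (cycleGraph n).Adj u v →
        min (u - b).val (b - u).val ≤ min (v - b).val (b - v).val + 1 := by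
      intro u v huv
      rw [cycleGraph_adj'] at huv
      simp only [Fin.val_sub_eq_ite] at huv ⊢
      have := u.isLt; have := v.isLt; have := b.isLt
      split_ifs at huv ⊢ <;> omega
    simpa using (cycleGraph_preconnected a b).le_add_dist_of_adj hlip

lemma isResolving_cycleGraph_zero_one (hn : 2 ≤ n) : IsResolving (cycleGraph n) {0, 1} := by
  intro u v huv
  by_contra! h
  have h0 := h 0 (by simp)
  have h1 := h 1 (by simp)
  simp only [cycleGraph_dist hn, Fin.val_sub_eq_ite, Fin.val_zero,
    Fin.val_one_of_two_le hn] at h0 h1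
  grind [Fin.val_ne_of_ne huv, u.isLt, v.isLt]

lemma not_isNLResolving_cycleGraph_of_subset_singleton (hn : 4 ≤ n) {X : Finset (Fin n)}
    {x : Fin n} (hX : X ⊆ {x}) : ¬ IsNLResolving (cycleGraph n) X := by
  have hv2 : (x + 1 - (x - 1)).val = 2 := by
    rw [show x + 1 - (x - 1) = 1 + 1 by ring, Fin.val_add_eq_ite, Fin.val_one_of_two_le (by omega)]
    split_ifs <;> omega
  have hvm2 : (x - 1 - (x + 1)).val = n - 2 := by
    rw [show x - 1 - (x + 1) = -(x + 1 - (x - 1)) by ring, Fin.val_neg', hv2,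
      Nat.mod_eq_of_lt (by omega)]
  intro hres
  obtain ⟨y, hy, hne⟩ := hres (x + 1) (x - 1)
    (fun h => by rw [h, sub_self] at hv2; simp at hv2)
    (by rw [cycleGraph_adj', hvm2, hv2]; omega)
  obtain rfl := Finset.mem_singleton.1 (hX hy)
  refine hne ?_
  rw [cycleGraph_dist (by omega), cycleGraph_dist (by omega), min_comm]
  congr 2 <;> ring

end Cycle

/-- For every `n ≥ 4`, the nonlocal metric dimension of the cycle
`Cₙ` equals `2`. -/
theorem stmt_2 (n : ℕ) (hn : 4 ≤ n) :
    nldim (SimpleGraph.cycleGraph n) = 2 := by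
  have : NeZero n := ⟨by omega⟩
  have : Nontrivial (Fin n) := Fin.nontrivial_iff_two_le.2 (by omega)
  refine nldim_eq_of_isLeast ⟨⟨{0, 1}, Finset.card_pair zero_ne_one,
    (isResolving_cycleGraph_zero_one (by omega)).isNLResolving⟩, ?_⟩
  rintro _ ⟨X, rfl, hX⟩
  by_contra! hcard
  obtain ⟨x, hx⟩ := Finset.card_le_one_iff_subset_singleton.1 (Nat.le_of_lt_succ hcard)
  exact not_isNLResolving_cycleGraph_of_subset_singleton hn hx hX
end

section
/- Let G be a connected simple graph that is not complete. Then dim_nl(G) = 1 if and only if there exists a vertex x of G such that for every k with 0 ≤ k ≤ diam(G), the distance level L_k(x) = {u ∈ V(G) : d_G(x,u) = k} induces a complete subgraph of G. -/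
open SimpleGraph

lemma isNLResolving_empty_iff {V : Type*} (G : SimpleGraph V) : IsNLResolving G ∅ ↔ G = ⊤ := by
  simp [IsNLResolving, eq_top_iff_forall_ne_adj]

lemma isNLResolving_singleton_iff {V : Type*} (G : SimpleGraph V) (x : V) :
    IsNLResolving G {x} ↔ ∀ u v : V, G.dist x u = G.dist x v → u ≠ v → G.Adj u v := by
  simp only [IsNLResolving, Finset.mem_singleton, exists_eq_left, dist_comm (v := x)]
  exact forall₂_congr fun u v => by tauto

lemma nldim_eq_one_iff {V : Type*} [Fintype V] {G : SimpleGraph V} (hnc : G ≠ ⊤) :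
    nldim G = 1 ↔ ∃ x : V, IsNLResolving G {x} := by
  set S := {n | ∃ X : Finset V, X.card = n ∧ IsNLResolving G X}
  have hS0 : 0 ∉ S := by
    rintro ⟨X, hX, hres⟩
    rw [Finset.card_eq_zero] at hX
    exact hnc ((isNLResolving_empty_iff G).mp (hX ▸ hres))
  constructor
  · intro h
    replace h : sInf S = 1 := h
    obtain ⟨X, hX, hres⟩ : 1 ∈ S := h ▸ Nat.sInf_mem (Nat.nonempty_of_pos_sInf (h ▸ one_pos))
    obtain ⟨x, rfl⟩ := Finset.card_eq_one.mp hX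
    exact ⟨x, hres⟩
  · rintro ⟨x, hx⟩
    have h1 : 1 ∈ S := ⟨{x}, Finset.card_singleton x, hx⟩
    have hne : nldim G ≠ 0 := fun h =>
      (Nat.sInf_eq_zero.mp h).elim hS0 (Set.nonempty_of_mem h1).ne_empty
    exact le_antisymm (Nat.sInf_le h1) (Nat.one_le_iff_ne_zero.mpr hne)

/-- For a connected non-complete graph `G`, `dim_nl(G) = 1` iff
there is a vertex `x` all of whose distance levels `L_k(x)`, `0 ≤ k ≤ diam(G)`,
induce complete subgraphs. -/
theorem stmt_3 {V : Type*} [Fintype V] (G : SimpleGraph V) (hG : G.Connected)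
    (hnc : G ≠ ⊤) :
    nldim G = 1 ↔
      ∃ x : V, ∀ k : ℕ, k ≤ G.diam →
        ∀ u v : V, G.dist x u = k → G.dist x v = k → u ≠ v → G.Adj u v := by
  have : Nonempty V := hG.nonempty
  have hdiam : G.ediam ≠ ⊤ := connected_iff_ediam_ne_top.mp hG
  rw [nldim_eq_one_iff hnc]
  refine exists_congr fun x => ?_
  rw [isNLResolving_singleton_iff]
  exact ⟨fun h k _ u v hu hv => h u v (hu.trans hv.symm),
    fun h u v huv => h _ (dist_le_diam hdiam) u v rfl huv.symm⟩
end

section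
/- If G is a connected simple graph and H is a simple graph that is not complete, then the nonlocal metric dimension of the corona product G ⊙ H equals n(G) · dim_nl(H + K_1), where n(G) is the number of vertices of G and H + K_1 is the join of H with a single vertex. -/
open SimpleGraph Finset

namespace SimpleGraph

variable {V V' : Type*} {G : SimpleGraph V} {G' : SimpleGraph V'} {u v : V}

lemma Adj.dist_le_dist_add_one {a b : V} (h : G.Adj a b) (c : V) :
    G.dist a c ≤ G.dist b c + 1 := by
  have := h.reachable.dist_triangle_left c
  rw [dist_eq_one_iff_adj.2 h] at this
  omega

lemma Walk.le_length_add_of_adj_le {f : V → ℕ} (hf : ∀ a b, G.Adj a b → f a ≤ f b + 1)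
    (p : G.Walk u v) : f u ≤ p.length + f v := by
  induction p with
  | nil => simp
  | cons h _ ih => have := hf _ _ h; rw [Walk.length_cons]; omega

lemma Reachable.le_dist_add_of_adj_le {f : V → ℕ} (hf : ∀ a b, G.Adj a b → f a ≤ f b + 1)
    (h : G.Reachable u v) : f u ≤ G.dist u v + f v := by
  obtain ⟨p, hp⟩ := h.exists_walk_length_eq_dist
  exact hp ▸ p.le_length_add_of_adj_le hf

lemma Hom.dist_le (φ : G →g G') (h : G.Reachable u v) : G'.dist (φ u) (φ v) ≤ G.dist u v := by
  obtain ⟨p, hp⟩ := h.exists_walk_length_eq_dist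
  exact hp ▸ (p.length_map φ).symm ▸ SimpleGraph.dist_le (p.map φ)

end SimpleGraph

section NonlocalDimension

variable {V : Type*} {G : SimpleGraph V}

lemma IsNLResolving.nonempty {X : Finset V} (hG : G ≠ ⊤) (hX : IsNLResolving G X) :
    X.Nonempty := by
  obtain ⟨u, v, hne, hadj⟩ := ne_top_iff_exists_not_adj.1 hG
  obtain ⟨x, hx, -⟩ := hX u v hne hadj
  exact ⟨x, hx⟩

lemma isNLResolving_univ [Fintype V] (hG : G.Connected) : IsNLResolving G univ :=
  fun u v hne _ => ⟨u, mem_univ u, by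
    rw [SimpleGraph.dist_self, SimpleGraph.dist_comm]
    exact (hG.pos_dist_of_ne hne).ne⟩

lemma nldim_le_card [Fintype V] {X : Finset V} (hX : IsNLResolving G X) : nldim G ≤ #X :=
  Nat.sInf_le ⟨X, rfl, hX⟩

lemma exists_isNLResolving_card_eq_nldim [Fintype V] (hG : G.Connected) :
    ∃ X : Finset V, #X = nldim G ∧ IsNLResolving G X :=
  Nat.sInf_mem (s := {n | ∃ X : Finset V, #X = n ∧ IsNLResolving G X})
    ⟨_, univ, rfl, isNLResolving_univ hG⟩

end NonlocalDimension

section Join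

variable {W : Type*} {H : SimpleGraph W}

@[simp]
lemma joinK1_adj_none_some (w : W) : (joinK1 H).Adj none (some w) := by
  simp [joinK1]

@[simp]
lemma joinK1_adj_some_some {w w' : W} : (joinK1 H).Adj (some w) (some w') ↔ H.Adj w w' := by
  simp only [joinK1, fromRel_adj]
  simpa [adj_comm] using H.ne_of_adj

lemma joinK1_dist_some_none (w : W) : (joinK1 H).dist (some w) none = 1 :=
  dist_eq_one_iff_adj.2 (joinK1_adj_none_some w).symm

lemma joinK1_connected : (joinK1 H).Connected := by
  have hreach (a : Option W) : (joinK1 H).Reachable none a := by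
    cases a with
    | none => rfl
    | some w => exact (joinK1_adj_none_some w).reachable
  exact ⟨fun a b => (hreach a).symm.trans (hreach b)⟩

lemma joinK1_ne_top (hH : H ≠ ⊤) : joinK1 H ≠ ⊤ := by
  obtain ⟨w, w', hne, hadj⟩ := ne_top_iff_exists_not_adj.1 hH
  exact ne_top_iff_exists_not_adj.2 ⟨some w, some w', by simpa, by simpa⟩

end Join

section Corona

variable {V W : Type*} {G : SimpleGraph V} {H : SimpleGraph W}

def coronaEquiv : V × Option W ≃ V ⊕ V × W where
  toFun x := x.2.elim (.inl x.1) fun w => .inr (x.1, w)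
  invFun u := u.elim (fun g => (g, none)) fun p => (p.1, some p.2)
  left_inv := by rintro ⟨g, _ | w⟩ <;> rfl
  right_inv := by rintro (g | ⟨g, w⟩) <;> rfl

lemma corona_adj_coronaEquiv {x y : V × Option W} :
    (corona G H).Adj (coronaEquiv x) (coronaEquiv y) ↔
      x.1 = y.1 ∧ (joinK1 H).Adj x.2 y.2 ∨ x.2 = none ∧ y.2 = none ∧ G.Adj x.1 y.1 := by
  rcases x with ⟨g, _ | w⟩ <;> rcases y with ⟨g', _ | w'⟩ <;>
    simp [coronaEquiv, corona, adj_comm] <;> grind [SimpleGraph.Adj.ne]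

variable (G H) in
@[simps]
def coronaCopy (g : V) : joinK1 H →g corona G H where
  toFun a := coronaEquiv (g, a)
  map_rel' h := corona_adj_coronaEquiv.2 (.inl ⟨rfl, h⟩)

variable (G H) in
@[simps]
def coronaBase : G →g corona G H where
  toFun g := coronaEquiv (g, none)
  map_rel' h := corona_adj_coronaEquiv.2 (.inr ⟨rfl, rfl, h⟩)

lemma corona_connected (hG : G.Connected) : (corona G H).Connected := by
  obtain ⟨g₀⟩ := hG.nonempty
  have hreach (x : V × Option W) :
      (corona G H).Reachable (coronaEquiv (g₀, none)) (coronaEquiv x) :=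
    ((hG g₀ x.1).map (coronaBase G H)).trans ((joinK1_connected none x.2).map (coronaCopy G H x.1))
  refine @Connected.mk _ _ ?_ ⟨coronaEquiv (g₀, none)⟩
  intro u v
  rw [← coronaEquiv.apply_symm_apply u, ← coronaEquiv.apply_symm_apply v]
  exact (hreach _).symm.trans (hreach _)

open Classical in
variable (G H) in
/-- The vertex `g` separates `H_g` from the rest of `corona G H`. -/
noncomputable def coronaDist (x y : V × Option W) : ℕ :=
  if x.1 = y.1 then (joinK1 H).dist x.2 y.2
  else (joinK1 H).dist x.2 none + G.dist x.1 y.1 + (joinK1 H).dist none y.2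

lemma coronaDist_self (x : V × Option W) : coronaDist G H x x = 0 := by
  simp [coronaDist]

lemma coronaDist_le_of_adj {x y : V × Option W}
    (h : (corona G H).Adj (coronaEquiv x) (coronaEquiv y)) (z : V × Option W) :
    coronaDist G H x z ≤ coronaDist G H y z + 1 := by
  obtain ⟨g, a⟩ := x
  obtain ⟨g', b⟩ := y
  obtain ⟨g'', c⟩ := z
  rcases corona_adj_coronaEquiv.1 h with ⟨rfl, hab⟩ | ⟨rfl, rfl, hgg'⟩
  · dsimp only at hab
    simp only [coronaDist]
    split_ifs
    · exact hab.dist_le_dist_add_one c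
    · have := hab.dist_le_dist_add_one none
      omega
  · simp only [coronaDist]
    have := hgg'.dist_le_dist_add_one g''
    have := dist_eq_one_iff_adj.2 hgg'
    have := dist_eq_one_iff_adj.2 hgg'.symm
    split_ifs <;> subst_vars <;> simp only [SimpleGraph.dist_self] at * <;> omega

lemma dist_corona (hG : G.Connected) (x y : V × Option W) :
    (corona G H).dist (coronaEquiv x) (coronaEquiv y) = coronaDist G H x y := by
  have hc := corona_connected (H := H) hG
  refine le_antisymm ?_ ?_
  · obtain ⟨g, a⟩ := x
    obtain ⟨g', b⟩ := y
    simp only [coronaDist]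
    split_ifs with h
    · subst h
      exact (coronaCopy G H g).dist_le (joinK1_connected a b)
    · have := (coronaCopy G H g).dist_le (joinK1_connected a none)
      have := (coronaBase G H).dist_le (hG g g')
      have := (coronaCopy G H g').dist_le (joinK1_connected none b)
      have := hc.dist_triangle (u := coronaEquiv (g, a)) (v := coronaEquiv (g, none))
        (w := coronaEquiv (g', b))
      have := hc.dist_triangle (u := coronaEquiv (g, none)) (v := coronaEquiv (g', none))
        (w := coronaEquiv (g', b))
      simp only [coronaCopy_apply, coronaBase_apply] at *
      omega
  · simpa [coronaDist_self] using (hc (coronaEquiv x) (coronaEquiv y)).le_dist_add_of_adj_le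
      (f := fun u => coronaDist G H (coronaEquiv.symm u) y) fun u v h => by
        obtain ⟨x, rfl⟩ := coronaEquiv.surjective u
        obtain ⟨x', rfl⟩ := coronaEquiv.surjective v
        simpa using coronaDist_le_of_adj h y

lemma dist_corona_of_fst_eq (hG : G.Connected) (g : V) (a b : Option W) :
    (corona G H).dist (coronaEquiv (g, a)) (coronaEquiv (g, b)) = (joinK1 H).dist a b := by
  simp [dist_corona hG, coronaDist]

lemma dist_corona_of_fst_ne (hG : G.Connected) {x y : V × Option W} (h : x.1 ≠ y.1) :
    (corona G H).dist (coronaEquiv x) (coronaEquiv y) =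
      (joinK1 H).dist x.2 none + G.dist x.1 y.1 + (joinK1 H).dist none y.2 := by
  simp [dist_corona hG, coronaDist, h]

lemma dist_corona_lt_of_fst_ne (hG : G.Connected) {x y : V × Option W} (hxy : x.1 ≠ y.1)
    (hle : (joinK1 H).dist x.2 none ≤ (joinK1 H).dist y.2 none) (c : Option W) :
    (corona G H).dist (coronaEquiv x) (coronaEquiv (x.1, c)) <
      (corona G H).dist (coronaEquiv y) (coronaEquiv (x.1, c)) := by
  obtain ⟨g, a⟩ := x
  dsimp only at hxy hle ⊢
  rw [dist_corona_of_fst_eq hG, dist_corona_of_fst_ne hG (Ne.symm hxy)]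
  dsimp only
  have := (joinK1_connected (H := H)).dist_triangle (u := a) (v := none) (w := c)
  have := hG.pos_dist_of_ne (Ne.symm hxy)
  omega

lemma isNLResolving_corona_of_joinK1 [Fintype V] (hG : G.Connected) {X : Finset (Option W)}
    (hX : IsNLResolving (joinK1 H) X) (hne : X.Nonempty) :
    IsNLResolving (corona G H) ((univ ×ˢ X).map coronaEquiv.toEmbedding) := by
  obtain ⟨c, hc⟩ := hne
  have hmem (g : V) {a : Option W} (ha : a ∈ X) :
      coronaEquiv (g, a) ∈ (univ ×ˢ X).map coronaEquiv.toEmbedding := by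
    simp [ha]
  intro u v huv hadj
  obtain ⟨x, rfl⟩ := coronaEquiv.surjective u
  obtain ⟨y, rfl⟩ := coronaEquiv.surjective v
  by_cases hxy : x.1 = y.1
  · obtain ⟨g, a⟩ := x
    obtain ⟨g', b⟩ := y
    obtain rfl : g = g' := hxy
    have hab : a ≠ b := by rintro rfl; exact huv rfl
    obtain ⟨d, hd, hdist⟩ :=
      hX a b hab fun h => hadj (corona_adj_coronaEquiv.2 (.inl ⟨rfl, h⟩))
    exact ⟨_, hmem g hd, by rwa [dist_corona_of_fst_eq hG, dist_corona_of_fst_eq hG]⟩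
  · rcases le_total ((joinK1 H).dist x.2 none) ((joinK1 H).dist y.2 none) with hle | hle
    · exact ⟨_, hmem x.1 hc, (dist_corona_lt_of_fst_ne hG hxy hle c).ne⟩
    · exact ⟨_, hmem y.1 hc, (dist_corona_lt_of_fst_ne hG (Ne.symm hxy) hle c).ne'⟩

lemma isNLResolving_joinK1_of_corona [DecidableEq V] [DecidableEq W] (hG : G.Connected)
    {X : Finset (V ⊕ V × W)} (hX : IsNLResolving (corona G H) X) (g : V) :
    IsNLResolving (joinK1 H)
      ({u ∈ X | (coronaEquiv.symm u).1 = g}.image fun u => (coronaEquiv.symm u).2) := by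
  rintro (_ | w) (_ | w') hne hadj
  · exact absurd rfl hne
  · exact absurd (joinK1_adj_none_some w') hadj
  · exact absurd (joinK1_adj_none_some w).symm hadj
  obtain ⟨u, hu, hdist⟩ := hX (coronaEquiv (g, some w)) (coronaEquiv (g, some w'))
    (by simpa using hne) fun h => hadj (by simpa using corona_adj_coronaEquiv.1 h)
  obtain ⟨⟨g', c⟩, rfl⟩ := coronaEquiv.surjective u
  obtain rfl : g' = g := by
    by_contra h
    apply hdist
    rw [dist_corona_of_fst_ne hG (Ne.symm h), dist_corona_of_fst_ne hG (Ne.symm h)]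
    simp only [joinK1_dist_some_none]
  refine ⟨c, mem_image.2 ⟨_, mem_filter.2 ⟨hu, by simp⟩, by simp⟩, ?_⟩
  rwa [dist_corona_of_fst_eq hG, dist_corona_of_fst_eq hG] at hdist

end Corona

/-- If `G` is connected and `H` is not complete, then
`dim_nl(G ⊙ H) = n(G) · dim_nl(H + K₁)`. -/
theorem stmt_5 {V W : Type*} [Fintype V] [Fintype W]
    (G : SimpleGraph V) (H : SimpleGraph W)
    (hG : G.Connected) (hH : H ≠ ⊤) :
    nldim (corona G H) = Fintype.card V * nldim (joinK1 H) := by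
  classical
  obtain ⟨X₀, hX₀card, hX₀⟩ := exists_isNLResolving_card_eq_nldim (joinK1_connected (H := H))
  obtain ⟨X, hXcard, hX⟩ := exists_isNLResolving_card_eq_nldim (corona_connected (H := H) hG)
  refine le_antisymm ?_ ?_
  · calc nldim (corona G H) ≤ #((univ ×ˢ X₀).map coronaEquiv.toEmbedding) :=
          nldim_le_card <| isNLResolving_corona_of_joinK1 hG hX₀ <|
            IsNLResolving.nonempty (joinK1_ne_top hH) hX₀
      _ = Fintype.card V * nldim (joinK1 H) := by
          rw [card_map, card_product, card_univ, hX₀card]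
  · calc Fintype.card V * nldim (joinK1 H) = ∑ _g : V, nldim (joinK1 H) := by simp
      _ ≤ ∑ g : V, #{u ∈ X | (coronaEquiv.symm u).1 = g} := sum_le_sum fun g _ =>
          (nldim_le_card (isNLResolving_joinK1_of_corona hG hX g)).trans card_image_le
      _ = nldim (corona G H) := by
          rw [← hXcard, card_eq_sum_card_fiberwise (f := fun u => (coronaEquiv.symm u).1)
            fun _ _ => mem_univ _]
end

section
/- Let n ≥ 7 and let S be a nonlocal metric basis of the wheel W_{1,n} (so S ⊆ V(C_n), |S| ≥ 2). Then at most one gap of S contains 3 or more vertices. -/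
/-!
If `A_{i,j}` and `A_{i',j'}` both have at least three vertices, the closed cycle neighbourhoods
of `i + 2` and `i' + 2` avoid `S`, so both vertices lie at distance `2` (through the centre)
from every vertex of `S`. They are not adjacent either, as that would put `i` or `i'` next to
the left end of the other gap, so a nonlocal resolving `S` forces `i = i'`; and a gap is
determined by its left end.
-/
open SimpleGraph Fin.CommRing

theorem IsNLResolving.eq_or_adj_of_forall_dist_eq {V : Type*} {G : SimpleGraph V}
    {X : Finset V} (hX : IsNLResolving G X) {u v : V}
    (h : ∀ x ∈ X, G.dist u x = G.dist v x) : u = v ∨ G.Adj u v := by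
  by_contra! ⟨hne, hadj⟩
  obtain ⟨x, hx, hd⟩ := hX u v hne hadj
  exact hd (h x hx)

theorem cycleGraph_adj_add_right {n : ℕ} {a b c : Fin (n + 2)} :
    (cycleGraph (n + 2)).Adj (a + c) (b + c) ↔ (cycleGraph (n + 2)).Adj a b := by
  simp only [cycleGraph_adj, add_sub_add_right_eq_sub]

section Wheel

variable {n : ℕ}

theorem wheel_adj_some_some {a b : Fin n} :
    (wheel n).Adj (some a) (some b) ↔ (cycleGraph n).Adj a b := by
  simp only [wheel, joinK1, fromRel_adj, Option.some.injEq, ne_eq, reduceCtorEq, false_or,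
    exists_and_left, exists_eq_left']
  exact ⟨fun ⟨_, h⟩ => h.elim id Adj.symm, fun h => ⟨h.ne, Or.inl h⟩⟩

theorem wheel_adj_some_none (a : Fin n) : (wheel n).Adj (some a) none := by
  simp [wheel, joinK1, fromRel_adj]

theorem wheel_dist_some_some_eq_two {a b : Fin n} (hne : a ≠ b)
    (hadj : ¬ (cycleGraph n).Adj a b) : (wheel n).dist (some a) (some b) = 2 := by
  let viaHub : (wheel n).Walk (some a) (some b) :=
    .cons (wheel_adj_some_none a) (.cons (wheel_adj_some_none b).symm .nil)
  have hle : (wheel n).dist (some a) (some b) ≤ 2 := dist_le viaHub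
  have hpos : (wheel n).dist (some a) (some b) ≠ 0 :=
    (Reachable.pos_dist_of_ne ⟨viaHub⟩ (Option.some_injective _ |>.ne hne)).ne'
  have hne_one : (wheel n).dist (some a) (some b) ≠ 1 := by
    rwa [Ne, dist_eq_one_iff_adj, wheel_adj_some_some]
  omega

end Wheel

section Gap

variable {n : ℕ} {S : Finset (Fin n)} {i j : Fin n}

theorem IsGap.add_notMem [NeZero n] (hg : IsGap S i j) {c : Fin n} (hc₀ : 0 < c.val)
    (hc : c.val < (j - i).val) : i + c ∉ S :=
  hg.2.2.2 (i + c) (by rwa [add_sub_cancel_left]) (by rwa [add_sub_cancel_left])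

theorem IsGap.right_unique [NeZero n] {j' : Fin n} (hg : IsGap S i j) (hg' : IsGap S i j') :
    j = j' := by
  have hpos : ∀ {k : Fin n}, i ≠ k → 0 < (k - i).val := fun hik =>
    Nat.pos_of_ne_zero fun h => hik (sub_eq_zero.mp (Fin.ext h)).symm
  rcases lt_trichotomy (j - i).val (j' - i).val with h | h | h
  · exact absurd hg.2.1 (hg'.2.2.2 j (hpos hg.2.2.1) h)
  · exact sub_left_inj.mp (Fin.ext h)
  · exact absurd hg'.2.1 (hg.2.2.2 j' (hpos hg'.2.2.1) h)

end Gap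

section LargeGap

variable {n : ℕ} {S : Finset (Fin (n + 2))} {i j : Fin (n + 2)}

theorem IsGap.dist_add_two_eq_two (hg : IsGap S i j) (h3 : 3 ≤ gapSize i j) {s : Fin (n + 2)}
    (hs : s ∈ S) : (wheel (n + 2)).dist (some (i + 2)) (some s) = 2 := by
  have h4 : 4 ≤ (j - i).val := by unfold gapSize at h3; omega
  have hlt := (j - i).isLt
  have hnot : ∀ c : ℕ, 0 < c → c < 4 → i + (c : Fin (n + 2)) ∉ S := fun c hc₀ hc => by
    have hc' : (c : Fin (n + 2)).val = c := Fin.val_cast_of_lt (by omega)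
    exact hg.add_notMem (by omega) (by omega)
  refine wheel_dist_some_some_eq_two (fun h => hnot 2 two_pos (by norm_num) (h ▸ hs)) ?_
  rw [← mem_neighborSet, cycleGraph_neighborSet]
  rintro (rfl | rfl)
  · exact hnot 1 one_pos (by norm_num) (by convert hs using 1; push_cast; ring)
  · exact hnot 3 three_pos (by norm_num) (by convert hs using 1; push_cast; ring)

theorem IsGap.add_one_notMem (hg : IsGap S i j) (h1 : 1 ≤ gapSize i j) : i + 1 ∉ S :=
  hg.add_notMem (by rw [Fin.val_one]; omega) (by rw [Fin.val_one]; unfold gapSize at h1; omega)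

theorem IsGap.not_cycleGraph_adj {i' j' : Fin (n + 2)} (hg : IsGap S i j) (hg' : IsGap S i' j')
    (h1 : 1 ≤ gapSize i j) (h1' : 1 ≤ gapSize i' j') : ¬ (cycleGraph (n + 2)).Adj i i' := by
  rw [← mem_neighborSet, cycleGraph_neighborSet]
  rintro (rfl | rfl)
  · exact hg'.add_one_notMem h1' (by rw [sub_add_cancel]; exact hg.1)
  · exact hg.add_one_notMem h1 hg'.1

end LargeGap

theorem stmt_10_general (n : ℕ) (S : Finset (Fin n))
    (hres : IsNLResolving (wheel n) (S.image some)) :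
    ∀ i j i' j' : Fin n, IsGap S i j → IsGap S i' j' →
      3 ≤ gapSize i j → 3 ≤ gapSize i' j' → i = i' ∧ j = j' := by
  intro i j i' j' hg hg' h3 h3'
  obtain ⟨m, rfl⟩ : ∃ m, n = m + 2 :=
    ⟨n - 2, by have := (j - i).isLt; unfold gapSize at h3; omega⟩
  have hmid := hres.eq_or_adj_of_forall_dist_eq (u := some (i + 2)) (v := some (i' + 2)) <| by
    simp only [Finset.forall_mem_image]
    intro s hs
    rw [hg.dist_add_two_eq_two h3 hs, hg'.dist_add_two_eq_two h3' hs]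
  have hii' : i = i' := by
    rcases hmid with h | h
    · exact add_right_cancel (Option.some_injective _ h)
    · rw [wheel_adj_some_some, cycleGraph_adj_add_right] at h
      exact absurd h (hg.not_cycleGraph_adj hg' (by omega) (by omega))
  subst hii'
  exact ⟨rfl, hg.right_unique hg'⟩

/-- If `S ⊆ V(Cₙ)` is a nonlocal metric basis of the wheel
`W_{1,n}`, `n ≥ 7`, `|S| ≥ 2`, then at most one gap of `S` contains `3` or
more vertices. -/
theorem stmt_10 (n : ℕ) (hn : 7 ≤ n) (S : Finset (Fin n)) (hS : 2 ≤ S.card)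
    (hres : IsNLResolving (wheel n) (S.image some))
    (hmin : (S.image some).card = nldim (wheel n)) :
    ∀ i j i' j' : Fin n, IsGap S i j → IsGap S i' j' →
      3 ≤ gapSize i j → 3 ≤ gapSize i' j' → i = i' ∧ j = j' :=
  stmt_10_general n S hres
end

section
/- For all integers s ≥ 1 and t ≥ 2, the nonlocal metric dimension of the complete bipartite graph K_{s,t} equals s + t − 2. -/
/-!
Vertices on the same side of `K_{s,t}` are non-adjacent false twins: they have the same
neighbourhood, hence the same distance to every third vertex, so a nonlocal resolving set
must contain all but at most one vertex of each side. Conversely, the complement of any edge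
is nonlocal resolving in a connected graph, since every non-adjacent pair then has a member in
the set, and that member resolves the pair by having distance zero to itself.
-/

open Finset

namespace SimpleGraph

variable {V : Type*} {G : SimpleGraph V} {u v x : V}

lemma dist_le_of_neighborSet_subset (h : G.neighborSet u ⊆ G.neighborSet v)
    (hr : G.Reachable u x) (hxu : x ≠ u) : G.dist v x ≤ G.dist u x := by
  obtain ⟨p, hp⟩ := hr.exists_walk_length_eq_dist
  cases p with
  | nil => exact absurd rfl hxu
  | cons hadj q =>
    calc G.dist v x ≤ (Walk.cons (h hadj) q).length := dist_le _
      _ = G.dist u x := hp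

lemma Connected.dist_eq_of_neighborSet_eq (hG : G.Connected)
    (h : G.neighborSet u = G.neighborSet v) (hxu : x ≠ u) (hxv : x ≠ v) :
    G.dist u x = G.dist v x :=
  le_antisymm (dist_le_of_neighborSet_subset h.ge (hG v x) hxv)
    (dist_le_of_neighborSet_subset h.le (hG u x) hxu)

variable {α β : Type*}

lemma completeBipartiteGraph_connected [Nonempty α] [Nonempty β] :
    (completeBipartiteGraph α β).Connected := by
  obtain ⟨a⟩ := ‹Nonempty α›
  obtain ⟨b⟩ := ‹Nonempty β›
  have hreach : ∀ w, (completeBipartiteGraph α β).Reachable w (.inl a) := by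
    rintro (a' | b')
    · exact (Adj.reachable (v := .inr b) (by simp)).trans (Adj.reachable (by simp))
    · exact Adj.reachable (by simp)
  exact ⟨fun w w' => (hreach w).trans (hreach w').symm⟩

lemma neighborSet_completeBipartiteGraph_inl (a : α) :
    (completeBipartiteGraph α β).neighborSet (.inl a) = Set.range .inr := by
  ext (_ | _) <;> simp

lemma neighborSet_completeBipartiteGraph_inr (b : β) :
    (completeBipartiteGraph α β).neighborSet (.inr b) = Set.range .inl := by
  ext (_ | _) <;> simp

end SimpleGraph

lemma Finset.card_sub_one_le_of_mem_or_mem {α : Type*} [Fintype α] {S : Finset α}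
    (h : ∀ a b, a ≠ b → a ∈ S ∨ b ∈ S) : Fintype.card α - 1 ≤ #S := by
  classical
  have hcompl : #Sᶜ ≤ 1 := card_le_one.mpr fun a ha b hb => by
    by_contra hab
    rw [mem_compl] at ha hb
    exact (h a b hab).elim ha hb
  have := card_compl S
  have := card_le_univ S
  omega

namespace IsNLResolving

variable {V : Type*} {G : SimpleGraph V} {X : Finset V} {u v : V}

lemma mem_or_mem_of_neighborSet_eq (hX : IsNLResolving G X) (hG : G.Connected) (huv : u ≠ v)
    (hadj : ¬G.Adj u v) (h : G.neighborSet u = G.neighborSet v) : u ∈ X ∨ v ∈ X := by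
  by_contra! hout
  obtain ⟨x, hx, hne⟩ := hX u v huv hadj
  exact hne (hG.dist_eq_of_neighborSet_eq h (ne_of_mem_of_not_mem hx hout.1)
    (ne_of_mem_of_not_mem hx hout.2))

end IsNLResolving

lemma isNLResolving_of_mem_or_mem {V : Type*} {G : SimpleGraph V} {X : Finset V}
    (hG : G.Connected) (h : ∀ u v, u ≠ v → ¬G.Adj u v → u ∈ X ∨ v ∈ X) :
    IsNLResolving G X := by
  intro u v huv hadj
  rcases h u v huv hadj with hu | hv
  · exact ⟨u, hu, by rw [SimpleGraph.dist_self]; exact (hG.pos_dist_of_ne huv.symm).ne⟩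
  · exact ⟨v, hv, by rw [SimpleGraph.dist_self]; exact (hG.pos_dist_of_ne huv).ne'⟩

lemma isNLResolving_compl_edge {V : Type*} [Fintype V] [DecidableEq V] {G : SimpleGraph V}
    (hG : G.Connected) {p q : V} (hpq : G.Adj p q) : IsNLResolving G (univ \ {p, q}) := by
  refine isNLResolving_of_mem_or_mem hG fun u v huv hadj => ?_
  by_contra! hout
  simp only [mem_sdiff, mem_univ, true_and, mem_insert, mem_singleton, not_not] at hout
  obtain ⟨rfl | rfl, rfl | rfl⟩ := hout
  all_goals first | exact huv rfl | exact hadj hpq | exact hadj hpq.symm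

section CompleteBipartite

open SimpleGraph

variable {α β : Type*} [Fintype α] [Fintype β] [Nonempty α] [Nonempty β]

lemma card_add_card_sub_two_le_of_isNLResolving {X : Finset (α ⊕ β)}
    (hX : IsNLResolving (completeBipartiteGraph α β) X) :
    Fintype.card α + Fintype.card β - 2 ≤ #X := by
  have hL : Fintype.card α - 1 ≤ #X.toLeft := card_sub_one_le_of_mem_or_mem fun a a' h => by
    simpa using hX.mem_or_mem_of_neighborSet_eq completeBipartiteGraph_connected
      (by simpa using h) (by simp) (by simp only [neighborSet_completeBipartiteGraph_inl])
  have hR : Fintype.card β - 1 ≤ #X.toRight := card_sub_one_le_of_mem_or_mem fun b b' h => by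
    simpa using hX.mem_or_mem_of_neighborSet_eq completeBipartiteGraph_connected
      (by simpa using h) (by simp) (by simp only [neighborSet_completeBipartiteGraph_inr])
  have := card_toLeft_add_card_toRight (u := X)
  have := Fintype.card_pos (α := α)
  have := Fintype.card_pos (α := β)
  omega

theorem nldim_completeBipartiteGraph :
    nldim (completeBipartiteGraph α β) = Fintype.card α + Fintype.card β - 2 := by
  classical
  obtain ⟨a⟩ := ‹Nonempty α›
  obtain ⟨b⟩ := ‹Nonempty β›
  have hres := isNLResolving_compl_edge completeBipartiteGraph_connected
    (show (completeBipartiteGraph α β).Adj (.inl a) (.inr b) by simp)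
  refine IsLeast.csInf_eq ⟨⟨_, ?_, hres⟩, ?_⟩
  · rw [card_sdiff_of_subset (subset_univ _), card_univ, Fintype.card_sum, card_pair (by simp)]
  · rintro _ ⟨X, rfl, hX⟩
    exact card_add_card_sub_two_le_of_isNLResolving hX

end CompleteBipartite

/-- For `s ≥ 1` and `t ≥ 2`,
`dim_nl(K_{s,t}) = s + t − 2`. -/
theorem stmt_15 (s t : ℕ) (hs : 1 ≤ s) (ht : 2 ≤ t) :
    nldim (completeBipartiteGraph (Fin s) (Fin t)) = s + t - 2 := by
  have : Nonempty (Fin s) := Fin.pos_iff_nonempty.mp hs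
  have : Nonempty (Fin t) := Fin.pos_iff_nonempty.mp (by omega)
  simpa using nldim_completeBipartiteGraph (α := Fin s) (β := Fin t)
end

section
/- If G is a connected simple graph whose girth is at least 7 (i.e., G contains no cycle of length at most 6), then dim_nl(G) ≤ β'(G) − 1, where β'(G) is the edge cover number of G. -/
/-!
Take a minimum edge cover. By minimality every cover edge has an endpoint covered by no other
cover edge, so the cover is a spanning star forest with leaf set `L`, `|L| ≤ β'(G)`, whose
centres lie outside `L`. If some centre carries two leaves `l₀, l₁`, then `L \ {l₀}` is a
nonlocal resolving set: two centres are told apart by distinct leaves attached to them (a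
coincidence would give a 4-cycle), and `l₀` is told apart from a centre `v` by a leaf `x` of `v`
unless `l₀ ~ x`, in which case `l₁` does the job, because `l₀` is at distance two from `l₁`
while `v` at distance two from `l₁` would close a cycle of length at most six.
Otherwise the cover is a perfect matching `v ↦ p v`. Connectivity gives an edge `ab` with
`b ≠ p a`; keeping `p b` and, from every other matching edge except `a (p a)`, an endpoint
not adjacent to `p a` gives a resolving set by the same three arguments.
-/

namespace SimpleGraph

variable {V : Type*} {G : SimpleGraph V}

section Girth

variable {a b c d e f : V}

lemma not_adj_of_four_le_egirth (h : 4 ≤ G.egirth) (hab : G.Adj a b) (hbc : G.Adj b c) :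
    ¬ G.Adj c a := fun hca => by
  have := le_egirth.1 h a (.cons hab (.cons hbc (.cons hca .nil))) (by
    simp [Walk.isCycle_def, Walk.isTrail_def, hab.ne, hbc.ne, hca.ne, hab.ne', hca.ne', Sym2.eq,
      Sym2.rel_iff'])
  norm_num at this

lemma not_adj_of_five_le_egirth (h : 5 ≤ G.egirth) (hab : G.Adj a b) (hbc : G.Adj b c)
    (hcd : G.Adj c d) (hac : a ≠ c) (hbd : b ≠ d) : ¬ G.Adj d a := fun hda => by
  have := le_egirth.1 h a (.cons hab (.cons hbc (.cons hcd (.cons hda .nil)))) (by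
    simp [Walk.isCycle_def, Walk.isTrail_def, hab.ne, hbc.ne, hcd.ne, hda.ne, hab.ne', hda.ne',
      hac, hbd, hac.symm, Sym2.eq, Sym2.rel_iff'])
  norm_num at this

lemma not_adj_of_seven_le_egirth (h : 7 ≤ G.egirth) (hab : G.Adj a b) (hbc : G.Adj b c)
    (hcd : G.Adj c d) (hde : G.Adj d e) (hef : G.Adj e f)
    (hac : a ≠ c) (had : a ≠ d) (hae : a ≠ e) (hbd : b ≠ d) (hbe : b ≠ e) (hbf : b ≠ f)
    (hce : c ≠ e) (hcf : c ≠ f) (hdf : d ≠ f) : ¬ G.Adj f a := fun hfa => by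
  have := le_egirth.1 h a
    (.cons hab (.cons hbc (.cons hcd (.cons hde (.cons hef (.cons hfa .nil)))))) (by
    simp [Walk.isCycle_def, Walk.isTrail_def, hab.ne, hbc.ne, hcd.ne, hde.ne, hef.ne, hfa.ne,
      hab.ne', hfa.ne', hac, had, hae, hbd, hbe, hbf, hce, hcf, hdf, hac.symm, had.symm,
      hae.symm, Sym2.eq, Sym2.rel_iff'])
  norm_num at this

end Girth

lemma dist_eq_two_iff {u v : V} :
    G.dist u v = 2 ↔ u ≠ v ∧ ¬ G.Adj u v ∧ (G.commonNeighbors u v).Nonempty := by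
  rw [dist, ENat.toNat_eq_iff two_ne_zero, ← edist_eq_two_iff]
  rfl

section Resolves

variable {X : Finset V} {u v x y c : V}

def Resolves (G : SimpleGraph V) (X : Finset V) (u v : V) : Prop :=
  ∃ x ∈ X, G.dist u x ≠ G.dist v x

lemma Resolves.symm (h : G.Resolves X u v) : G.Resolves X v u :=
  let ⟨x, hx, hd⟩ := h
  ⟨x, hx, hd.symm⟩

lemma resolves_of_mem (hG : G.Connected) (hu : u ∈ X) (huv : u ≠ v) : G.Resolves X u v :=
  ⟨u, hu, by rw [dist_self]; exact (hG.pos_dist_of_ne huv.symm).ne⟩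

lemma isNLResolving_of_resolves (hG : G.Connected)
    (h : ∀ u v, u ∉ X → v ∉ X → u ≠ v → ¬ G.Adj u v → G.Resolves X u v) :
    IsNLResolving G X := by
  intro u v huv hadj
  by_cases hu : u ∈ X
  · exact resolves_of_mem hG hu huv
  by_cases hv : v ∈ X
  · exact (resolves_of_mem hG hv huv.symm).symm
  exact h u v hu hv huv hadj

lemma resolves_of_adj_of_not_adj (hx : x ∈ X) (hvx : G.Adj v x) (hux : ¬ G.Adj u x) :
    G.Resolves X u v :=
  ⟨x, hx, by rw [dist_eq_one_iff_adj.2 hvx]; exact mt dist_eq_one_iff_adj.1 hux⟩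

lemma resolves_of_adj_of_adj (h : 5 ≤ G.egirth) (hx : x ∈ X) (hy : y ∈ X)
    (hux : G.Adj u x) (hvy : G.Adj v y) (huv : u ≠ v) (hxy : x ≠ y) : G.Resolves X u v := by
  by_cases hvx : G.Adj v x
  · by_cases huy : G.Adj u y
    · exact (not_adj_of_five_le_egirth h hux hvx.symm hvy huv hxy huy.symm).elim
    · exact resolves_of_adj_of_not_adj hy hvy huy
  · exact (resolves_of_adj_of_not_adj hx hux hvx).symm

/-- When `u ~ x`, a common neighbour of `v` and `y` would close a cycle of length at most six
through `v, x, u, c, y`. -/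
lemma resolves_of_adj_of_dist_eq_two (h : 7 ≤ G.egirth) (huc : G.Adj u c) (hcy : G.Adj c y)
    (hy : y ∈ X) (huy : u ≠ y) (hx : x ∈ X) (hvx : G.Adj v x) (hxc : x ≠ c) (huv : u ≠ v)
    (hadj : ¬ G.Adj u v) : G.Resolves X u v := by
  have h5 : 5 ≤ G.egirth := le_trans (by norm_num) h
  by_cases hux : G.Adj u x
  swap
  · exact resolves_of_adj_of_not_adj hx hvx hux
  have hdu : G.dist u y = 2 := dist_eq_two_iff.2
    ⟨huy, not_adj_of_four_le_egirth (le_trans (by norm_num) h) hcy.symm huc.symm, c, huc,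
      hcy.symm⟩
  refine ⟨y, hy, fun hdv => ?_⟩
  obtain ⟨hvy, hvy', w, hvw, hwy⟩ := dist_eq_two_iff.1 (hdu ▸ hdv.symm)
  by_cases hwc : w = c
  · subst hwc
    exact not_adj_of_five_le_egirth h5 hux hvx.symm hvw huv hxc huc.symm
  by_cases hwu : w = u
  · exact hadj (hwu ▸ hvw).symm
  by_cases hwx : w = x
  · subst hwx
    exact not_adj_of_five_le_egirth h5 hux.symm huc hcy hxc huy hwy
  have hvc : v ≠ c := fun hvc => hadj (hvc ▸ huc)
  have hxy : x ≠ y := fun hxy => hvy' (hxy ▸ hvx)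
  exact not_adj_of_seven_le_egirth h hvx hux.symm huc hcy hwy huv.symm hvc hvy hxc hxy
    (Ne.symm hwx) huy (Ne.symm hwu) (Ne.symm hwc) hvw.symm

end Resolves

section EdgeCover

def IsEdgeCover (G : SimpleGraph V) (F : Finset (Sym2 V)) : Prop :=
  ↑F ⊆ G.edgeSet ∧ ∀ v, ∃ e ∈ F, v ∈ e

/-- The edges `s(l, c l)` with `l ∈ L` form a spanning star forest whose leaves are `L`. -/
structure IsStarCover (G : SimpleGraph V) (L : Finset V) (c : V → V) : Prop where
  adj : ∀ l ∈ L, G.Adj l (c l)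
  center_notMem : ∀ l ∈ L, c l ∉ L
  exists_center_eq : ∀ v ∉ L, ∃ l ∈ L, c l = v

variable [Fintype V] {F : Finset (Sym2 V)}

lemma edgeCoverNum_le_card (hF : G.IsEdgeCover F) : edgeCoverNum G ≤ F.card :=
  Nat.sInf_le ⟨F, rfl, hF⟩

lemma exists_isEdgeCover_card_eq (h : ∀ v, ∃ w, G.Adj v w) :
    ∃ F, G.IsEdgeCover F ∧ F.card = edgeCoverNum G := by
  classical
  have hcover : G.IsEdgeCover G.edgeFinset := by
    refine ⟨by simp, fun v => ?_⟩
    obtain ⟨w, hw⟩ := h v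
    exact ⟨s(v, w), by simpa using hw, Sym2.mem_mk_left v w⟩
  obtain ⟨F, hcard, hF⟩ : edgeCoverNum G ∈ {n | ∃ F, F.card = n ∧ G.IsEdgeCover F} :=
    Nat.sInf_mem (s := {n | ∃ F, F.card = n ∧ G.IsEdgeCover F}) ⟨_, _, rfl, hcover⟩
  exact ⟨F, hF, hcard⟩

lemma IsEdgeCover.exists_private (hF : G.IsEdgeCover F) (hmin : F.card ≤ edgeCoverNum G)
    {e : Sym2 V} (he : e ∈ F) : ∃ l ∈ e, ∀ e' ∈ F, l ∈ e' → e' = e := by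
  classical
  by_contra! hshared
  have hcover : G.IsEdgeCover (F.erase e) := by
    refine ⟨subset_trans (by simp) hF.1, fun v => ?_⟩
    obtain ⟨f, hf, hvf⟩ := hF.2 v
    by_cases hfe : f = e
    · obtain ⟨f', hf', hvf', hne⟩ := hshared v (hfe ▸ hvf)
      exact ⟨f', Finset.mem_erase.2 ⟨hne, hf'⟩, hvf'⟩
    · exact ⟨f, Finset.mem_erase.2 ⟨hfe, hf⟩, hvf⟩
  have := edgeCoverNum_le_card hcover
  have := Finset.card_erase_of_mem he
  have := Finset.card_pos.2 ⟨e, he⟩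
  omega

lemma IsEdgeCover.exists_isStarCover [Nonempty V] (hF : G.IsEdgeCover F)
    (hmin : F.card ≤ edgeCoverNum G) : ∃ L c, G.IsStarCover L c ∧ L.card ≤ F.card := by
  classical
  have hpriv : ∀ e ∈ F, ∃ l ∈ e, ∀ e' ∈ F, l ∈ e' → e' = e := fun e he =>
    hF.exists_private hmin he
  choose! lf _ hpriv using hpriv
  choose ed hed hved using hF.2
  set c : V → V := fun v => Sym2.Mem.other (hved v)
  have hspec : ∀ v, s(v, c v) = ed v := fun v => Sym2.other_spec (hved v)
  have hadj : ∀ v, G.Adj v (c v) := fun v => by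
    rw [← mem_edgeSet, hspec]
    exact hF.1 (hed v)
  have hed_lf : ∀ e ∈ F, ed (lf e) = e := fun e he => hpriv e he _ (hed _) (hved _)
  refine ⟨F.image lf, c, ⟨fun l _ => hadj l, ?_, ?_⟩, Finset.card_image_le⟩
  · simp only [Finset.mem_image]
    rintro _ ⟨e, he, rfl⟩ ⟨e', he', hce'⟩
    have hmem : lf e' ∈ e := by
      have := Sym2.mem_mk_right (lf e) (c (lf e))
      rwa [hspec, hed_lf e he, ← hce'] at this
    obtain rfl := hpriv e' he' e he hmem
    exact (hadj (lf e)).ne hce'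
  · intro v hv
    refine ⟨lf (ed v), Finset.mem_image_of_mem _ (hed v), ?_⟩
    have hmem := hved v
    rw [← hed_lf _ (hed v), ← hspec, Sym2.mem_iff] at hmem
    exact (hmem.resolve_left fun h => hv (h ▸ Finset.mem_image_of_mem _ (hed v))).symm

end EdgeCover

variable {L : Finset V} {c : V → V}

lemma IsStarCover.isNLResolving_erase [DecidableEq V] (hS : G.IsStarCover L c)
    (hG : G.Connected) (h : 7 ≤ G.egirth) {l₀ l₁ : V} (hl₀ : l₀ ∈ L) (hl₁ : l₁ ∈ L)
    (hne : l₀ ≠ l₁) (hc : c l₀ = c l₁) : IsNLResolving G (L.erase l₀) := by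
  have hrep : ∀ v ∉ L, ∃ l ∈ L.erase l₀, c l = v := by
    intro v hv
    obtain ⟨l, hl, rfl⟩ := hS.exists_center_eq v hv
    by_cases hl0 : l = l₀
    · exact ⟨l₁, Finset.mem_erase.2 ⟨hne.symm, hl₁⟩, hl0 ▸ hc.symm⟩
    · exact ⟨l, Finset.mem_erase.2 ⟨hl0, hl⟩, rfl⟩
  have hadj : ∀ l ∈ L.erase l₀, G.Adj (c l) l := fun l hl =>
    (hS.adj l (Finset.mem_of_mem_erase hl)).symm
  have key : ∀ u v, u ∉ L.erase l₀ → v ∉ L → u ≠ v → ¬ G.Adj u v →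
      G.Resolves (L.erase l₀) u v := by
    intro u v hu hv huv hnadj
    obtain ⟨x, hx, rfl⟩ := hrep v hv
    by_cases hu₀ : u = l₀
    · subst hu₀
      have hxc : x ≠ c u := fun hxc =>
        hS.center_notMem u hl₀ (hxc ▸ Finset.mem_of_mem_erase hx)
      exact resolves_of_adj_of_dist_eq_two h (hS.adj u hl₀) (hc ▸ hadj l₁ (by simpa [hne.symm]))
        (Finset.mem_erase.2 ⟨hne.symm, hl₁⟩) hne hx (hadj x hx) hxc huv hnadj
    · obtain ⟨y, hy, rfl⟩ := hrep u (by simpa [hu₀] using hu)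
      exact resolves_of_adj_of_adj (le_trans (by norm_num) h) hy hx (hadj y hy) (hadj x hx) huv
        (fun hyx => huv (hyx ▸ rfl))
  refine isNLResolving_of_resolves hG fun u v hu hv huv hnadj => ?_
  by_cases hvL : v ∈ L
  · have hv₀ : v = l₀ := by simpa [hvL] using hv
    exact (key v u hv (by simpa [hv₀ ▸ huv] using hu) huv.symm (hnadj ∘ Adj.symm)).symm
  · exact key u v hu hvL huv hnadj

lemma IsStarCover.exists_involutive [Nonempty V] (hS : G.IsStarCover L c)
    (hinj : Set.InjOn c L) :
    ∃ p : V → V, (∀ v, G.Adj v (p v)) ∧ Function.Involutive p ∧ ∀ v, v ∈ L ↔ p v ∉ L := by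
  classical
  have hmem : ∀ v ∉ L, Function.invFunOn c L v ∈ L := fun v hv =>
    Finset.mem_coe.1 (Function.invFunOn_mem (hS.exists_center_eq v hv))
  have heq : ∀ v ∉ L, c (Function.invFunOn c L v) = v := fun v hv =>
    Function.invFunOn_eq (hS.exists_center_eq v hv)
  refine ⟨fun v => if v ∈ L then c v else Function.invFunOn c L v, fun v => ?_, fun v => ?_,
    fun v => ?_⟩ <;> by_cases hv : v ∈ L
  · simpa [hv] using hS.adj v hv
  · simpa [hv, heq v hv] using (hS.adj _ (hmem v hv)).symm
  · simp [hv, hS.center_notMem v hv, hinj.leftInvOn_invFunOn hv]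
  · simp [hv, hmem v hv, heq v hv]
  · simp [hv, hS.center_notMem v hv]
  · simp [hv, hmem v hv]

section PerfectMatching

variable {X S : Finset V} {p : V → V} {a b : V}

lemma isNLResolving_of_involutive (hG : G.Connected) (h : 7 ≤ G.egirth)
    (hp : ∀ v, G.Adj v (p v)) (hpp : Function.Involutive p) (hab : G.Adj a b) (hba : b ≠ p a)
    (hbX : p b ∈ X) (hX : ∀ v ∉ X, v ≠ a → v ≠ p a → v ≠ b → p v ∈ X ∧ ¬ G.Adj (p a) (p v)) :
    IsNLResolving G X := by
  have h5 : 5 ≤ G.egirth := le_trans (by norm_num) h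
  have hapb : a ≠ p b := fun hapb => hba (by rw [hapb, hpp])
  have hpX : ∀ v ∉ X, v ≠ a → v ≠ p a → p v ∈ X := fun v hv hva hvpa => by
    by_cases hvb : v = b
    · exact hvb ▸ hbX
    · exact (hX v hv hva hvpa hvb).1
  have hnadj : ∀ v ∉ X, v ≠ a → v ≠ p a → ¬ G.Adj (p a) (p v) := fun v hv hva hvpa => by
    by_cases hvb : v = b
    · subst hvb
      exact fun hpa => not_adj_of_five_le_egirth h5 (hp a).symm hab (hp v) hba.symm hapb hpa.symm
    · exact (hX v hv hva hvpa hvb).2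
  have key : ∀ u v, u ∉ X → v ∉ X → v ≠ a → v ≠ p a → u ≠ v → ¬ G.Adj u v →
      G.Resolves X u v := by
    intro u v hu hv hva hvpa huv huvadj
    by_cases hua : u = a
    · subst hua
      have hpvb : p v ≠ b := fun hpvb => hv (by rw [← hpp v, hpvb]; exact hbX)
      exact resolves_of_adj_of_dist_eq_two h hab (hp b) hbX hapb (hpX v hv hva hvpa) (hp v) hpvb
        huv huvadj
    by_cases hupa : u = p a
    · exact hupa ▸ resolves_of_adj_of_not_adj (hpX v hv hva hvpa) (hp v) (hnadj v hv hva hvpa)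
    · exact resolves_of_adj_of_adj h5 (hpX u hu hua hupa) (hpX v hv hva hvpa) (hp u) (hp v) huv
        (hpp.injective.ne huv)
  refine isNLResolving_of_resolves hG fun u v hu hv huv huvadj => ?_
  by_cases hv' : v ≠ a ∧ v ≠ p a
  · exact key u v hu hv hv'.1 hv'.2 huv huvadj
  have hu' : u ≠ a ∧ u ≠ p a := by
    grind [hp a, (hp a).symm]
  exact (key v u hv hu hu'.1 hu'.2 huv.symm (huvadj ∘ Adj.symm)).symm

lemma card_le_of_involutive [DecidableEq V] (hpp : Function.Involutive p)
    (hL : ∀ v, v ∈ L ↔ p v ∉ L) (hS : ∀ v ∈ S, p v ∉ S) : S.card ≤ L.card := by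
  let ρ : V → V := fun v => if v ∈ L then v else p v
  refine Finset.card_le_card_of_injOn ρ (fun v _ => ?_) fun v hv w hw hvw => ?_
  · by_cases hv : v ∈ L <;> simp [ρ, hv, (hL (p v)).2, hpp v]
  by_contra hne
  have hwv : w = p v := by
    by_cases hv : v ∈ L <;> by_cases hw : w ∈ L <;> simp only [ρ, hv, hw, if_true, if_false] at hvw
    · exact absurd hvw hne
    · rw [hvw, hpp w]
    · exact hvw.symm
    · exact absurd (hpp.injective hvw) hne
  exact hS v hv (hwv ▸ hw)

lemma exists_partial_transversal_of_involutive [Fintype V] (h : 5 ≤ G.egirth)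
    (hp : ∀ v, G.Adj v (p v)) (hpp : Function.Involutive p) (hL : ∀ v, v ∈ L ↔ p v ∉ L)
    (hab : G.Adj a b) (hba : b ≠ p a) :
    ∃ X : Finset V, p b ∈ X ∧
      (∀ v ∉ X, v ≠ a → v ≠ p a → v ≠ b → p v ∈ X ∧ ¬ G.Adj (p a) (p v)) ∧
      X.card + 1 ≤ L.card := by
  classical
  -- from each matching edge other than `a (p a)` and `b (p b)` keep the endpoint outside
  -- `N(p a)`, and the one in `L` if both are; from `b (p b)` keep `p b`
  let X := Finset.univ.filter fun v => v ≠ a ∧ v ≠ p a ∧ v ≠ b ∧ ¬ G.Adj (p a) v ∧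
    (v ∈ L ∨ G.Adj (p a) (p v) ∨ v = p b)
  have hmem : ∀ v, v ∈ X ↔ v ≠ a ∧ v ≠ p a ∧ v ≠ b ∧ ¬ G.Adj (p a) v ∧
      (v ∈ L ∨ G.Adj (p a) (p v) ∨ v = p b) := by simp [X]
  have hbX : p b ∈ X := by
    have hapb : ¬ G.Adj (p a) (p b) := fun hadj => not_adj_of_five_le_egirth h (hp a).symm hab
      (hp b) hba.symm (fun hapb => hba (by rw [hapb, hpp])) hadj.symm
    rw [hmem]
    grind [Function.Involutive, (hp b).ne, hab.ne]
  have hX : ∀ v ∉ X, v ≠ a → v ≠ p a → v ≠ b → p v ∈ X ∧ ¬ G.Adj (p a) (p v) := by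
    intro v hv hva hvpa hvb
    have hvpb : v ≠ p b := fun h => hv (h ▸ hbX)
    have hv' : G.Adj (p a) v ∨ (v ∉ L ∧ ¬ G.Adj (p a) (p v)) := by
      rw [hmem] at hv
      tauto
    have hpv : ¬ G.Adj (p a) (p v) := hv'.elim (fun hav hapv =>
      not_adj_of_four_le_egirth (le_trans (by norm_num) h) hav (hp v) hapv.symm) And.right
    rw [hmem]
    grind [Function.Involutive, hL v]
  -- `insert a X` meets each matching edge at most once
  have hXp : ∀ v ∈ insert a X, p v ∉ insert a X := fun v hv hpv => by
    rw [Finset.mem_insert, hmem] at hv hpv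
    grind [Function.Involutive, hL v, (hp v).ne]
  refine ⟨X, hbX, hX, ?_⟩
  have := card_le_of_involutive hpp hL hXp
  rwa [Finset.card_insert_of_notMem fun h => ((hmem a).1 h).1 rfl] at this

lemma Connected.eq_or_eq_of_forall_adj (hG : G.Connected) (hpp : Function.Involutive p)
    (h : ∀ a b, G.Adj a b → b = p a) (u v : V) : v = u ∨ v = p u := by
  by_contra! hv
  obtain ⟨d, -, hd, hd'⟩ := (hG.preconnected u v).some.exists_boundary_dart {u, p u}
    (by simp) (by simpa using hv)
  apply hd'
  rw [h _ _ d.adj]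
  obtain hd | hd := Set.mem_insert_iff.1 hd <;> simp_all [hpp u]

lemma exists_isNLResolving_of_involutive [Fintype V] (hG : G.Connected) (h : 7 ≤ G.egirth)
    (hp : ∀ v, G.Adj v (p v)) (hpp : Function.Involutive p) (hL : ∀ v, v ∈ L ↔ p v ∉ L) :
    ∃ X, IsNLResolving G X ∧ X.card ≤ L.card - 1 := by
  by_cases hcross : ∃ a b, G.Adj a b ∧ b ≠ p a
  · obtain ⟨a, b, hab, hba⟩ := hcross
    obtain ⟨X, hbX, hX, hcard⟩ :=
      exists_partial_transversal_of_involutive (le_trans (by norm_num) h) hp hpp hL hab hba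
    exact ⟨X, isNLResolving_of_involutive hG h hp hpp hab hba hbX hX, by omega⟩
  · push Not at hcross
    refine ⟨∅, fun u v huv hadj => ?_, by simp⟩
    obtain rfl | rfl := hG.eq_or_eq_of_forall_adj hpp hcross u v
    · exact (huv rfl).elim
    · exact (hadj (hp u)).elim

end PerfectMatching

end SimpleGraph

open SimpleGraph in
/-- If `G` is a connected graph of girth at least `7` (no cycle
of length at most `6`), then `dim_nl(G) ≤ β'(G) − 1`. -/
theorem stmt_17 {V : Type*} [Fintype V] (G : SimpleGraph V) (hG : G.Connected)
    (hn : 2 ≤ Fintype.card V)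
    (hgirth : ∀ (v : V) (w : G.Walk v v), w.IsCycle → 7 ≤ w.length) :
    nldim G ≤ edgeCoverNum G - 1 := by
  classical
  have : Nontrivial V := Fintype.one_lt_card_iff_nontrivial.1 hn
  have h : 7 ≤ G.egirth := le_egirth.2 fun v w hw => by exact_mod_cast hgirth v w hw
  obtain ⟨F, hF, hFcard⟩ := exists_isEdgeCover_card_eq hG.preconnected.exists_adj_of_nontrivial
  obtain ⟨L, c, hS, hLF⟩ := hF.exists_isStarCover hFcard.le
  obtain ⟨X, hX, hXL⟩ : ∃ X, IsNLResolving G X ∧ X.card ≤ L.card - 1 := by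
    by_cases hinj : Set.InjOn c L
    · obtain ⟨p, hp, hpp, hpL⟩ := hS.exists_involutive hinj
      exact exists_isNLResolving_of_involutive hG h hp hpp hpL
    · obtain ⟨l₀, hl₀, l₁, hl₁, hc, hne⟩ : ∃ l₀ ∈ L, ∃ l₁ ∈ L, c l₀ = c l₁ ∧ l₀ ≠ l₁ := by
        simpa [Set.InjOn] using hinj
      exact ⟨L.erase l₀, hS.isNLResolving_erase hG h hl₀ hl₁ hne hc,
        (Finset.card_erase_of_mem hl₀).le⟩
  calc nldim G ≤ X.card := Nat.sInf_le ⟨X, rfl, hX⟩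
    _ ≤ edgeCoverNum G - 1 := by omega
end
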